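/- arXiv:1703.05152 — 3 statements merged into one kernel-verified Lean document; each statement's English description precedes it below -/
import Mathlib

section
/- Let n ≥ 1, μ_1 ≥ … ≥ μ_n > 0 with μ_1 + … + μ_n = 1, let M = μ_1, let δ > 0, and for each i let σ_i = ∑_{k=1}^i μ_k. Then min_{1 ≤ i ≤ n} ∏_{j=1}^i (1 − μ_j/(σ_i + δ)) ≥ min(δ/(δ+M), 1/e). (Equivalently, the Samuels lower bound, in which (1+δ) − ∑_{k=i+1}^n μ_k = σ_i + δ, is always at least Feige's conjectured bound.) -/
/-!
Fix `i`, put `σ = σ_i` and `c = σ + δ > M`. By Bernoulli's inequality with exponent `μ_j / M ∈ (0, 1]`,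
`1 - μ_j / c ≥ (1 - M / c) ^ (μ_j / M)`, so the product is at least `(1 - M / c) ^ (σ / M)`.
In the units `u = σ / M ≥ 1`, `a = δ / M` this is `exp (-φ u)` with `φ u = u log ((u + a) / (u + a - 1))`,
and `φ 1 = log ((1 + a) / a)` corresponds to `δ / (δ + M)`, so it suffices that `φ u ≤ max 1 (φ 1)`.
The Padé bound `log (1 + x) ≤ x (6 + x) / (6 + 4x)` turns both `φ u ≤ 1` and `φ' ≤ 0` into linear
conditions in `u`; when the first fails at `u`, the second holds on all of `[1, u]`.
-/

open Real Finset Set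

theorem Real.log_one_add_le_pade {x : ℝ} (hx : 0 ≤ x) :
    log (1 + x) ≤ x * (6 + x) / (6 + 4 * x) := by
  set t := x * (6 + x) / (6 + 4 * x) with ht
  have htnn : 0 ≤ t := by positivity
  rw [log_le_iff_le_exp (by linarith)]
  calc 1 + x ≤ 1 + t + t ^ 2 / 2 + t ^ 3 / 6 + t ^ 4 / 24 := by
        have expand : t + t ^ 2 / 2 + t ^ 3 / 6 + t ^ 4 / 24 - x
            = x ^ 4 * (864 + 1296 * x + 720 * x ^ 2 + 40 * x ^ 3 + x ^ 4) / (24 * (6 + 4 * x) ^ 4) := by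
          rw [ht]; field_simp; ring
        have : 0 ≤ x ^ 4 * (864 + 1296 * x + 720 * x ^ 2 + 40 * x ^ 3 + x ^ 4) / (24 * (6 + 4 * x) ^ 4) := by
          positivity
        linarith
    _ ≤ exp t := by
        have := sum_le_exp_of_nonneg htnn 5
        simp only [sum_range_succ, range_zero, sum_empty, Nat.factorial] at this
        norm_num at this
        linarith

theorem Real.log_add_one_sub_log_le {v : ℝ} (hv : 0 < v) :
    log (v + 1) - log v ≤ (6 * v + 1) / (v * (6 * v + 4)) := by
  have h := log_one_add_le_pade (inv_nonneg.2 hv.le)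
  rw [← log_div (by linarith) hv.ne', show (v + 1) / v = 1 + v⁻¹ by field_simp]
  convert h using 1
  field_simp

/-- `(1 - 1 / (t + a)) ^ t = exp (-samuelsExponent a t)`. -/
noncomputable def samuelsExponent (a t : ℝ) : ℝ := t * (log (t + a) - log (t + a - 1))

theorem hasDerivAt_samuelsExponent {a t : ℝ} (h : 0 < t + a - 1) :
    HasDerivAt (samuelsExponent a)
      (log (t + a) - log (t + a - 1) - t / ((t + a) * (t + a - 1))) t := by
  have hta : t + a ≠ 0 := by linarith
  have hw : HasDerivAt (fun s => log (s + a)) (1 / (t + a)) t :=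
    ((hasDerivAt_id' t).add_const a).log hta
  have hv : HasDerivAt (fun s => log (s + a - 1)) (1 / (t + a - 1)) t :=
    (((hasDerivAt_id' t).add_const a).sub_const 1).log h.ne'
  refine ((hasDerivAt_id' t).fun_mul (hw.fun_sub hv)).congr_deriv ?_
  field_simp
  ring

theorem samuelsExponent_le_one {a u : ℝ} (ha : 0 < a) (hu : 1 ≤ u)
    (h : 0 ≤ u * (6 * a - 3) + 6 * a ^ 2 - 8 * a + 2) : samuelsExponent a u ≤ 1 := by
  have hv : 0 < u + a - 1 := by linarith
  calc samuelsExponent a u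
      ≤ u * ((6 * (u + a - 1) + 1) / ((u + a - 1) * (6 * (u + a - 1) + 4))) := by
        refine mul_le_mul_of_nonneg_left ?_ (by linarith)
        simpa using log_add_one_sub_log_le hv
    _ ≤ 1 := by
        rw [mul_div_assoc', div_le_one (by positivity)]
        linarith [show (u + a - 1) * (6 * (u + a - 1) + 4) - u * (6 * (u + a - 1) + 1)
          = u * (6 * a - 3) + 6 * a ^ 2 - 8 * a + 2 by ring]

theorem samuelsExponent_antitoneOn {a u : ℝ} (ha : 0 < a)
    (h : u * (6 * a - 3) + 6 * a ^ 2 - 8 * a + 2 < 0) :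
    AntitoneOn (samuelsExponent a) (Icc 1 u) := by
  have hderiv : ∀ t ∈ Icc 1 u, HasDerivAt (samuelsExponent a)
      (log (t + a) - log (t + a - 1) - t / ((t + a) * (t + a - 1))) t :=
    fun t ht => hasDerivAt_samuelsExponent (by linarith [ht.1])
  refine antitoneOn_of_hasDerivWithinAt_nonpos (convex_Icc 1 u)
    (fun t ht => (hderiv t ht).continuousAt.continuousWithinAt)
    (fun t ht => (hderiv t (interior_subset ht)).hasDerivWithinAt) fun t ht => ?_
  rw [interior_Icc] at ht
  obtain ⟨ht1, htu⟩ := ht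
  have hw : 0 < t + a - 1 := by linarith
  have hE : t * (6 * a - 3) + 6 * a ^ 2 - 5 * a ≤ 0 := by
    rcases le_or_gt a (1 / 2) with ha2 | ha2
    · nlinarith [mul_nonneg (sub_nonneg.2 ht1.le) (by linarith : (0 : ℝ) ≤ 3 - 6 * a)]
    · nlinarith [mul_nonneg (sub_nonneg.2 htu.le) (by linarith : (0 : ℝ) ≤ 6 * a - 3),
        mul_nonneg (by linarith : (0 : ℝ) ≤ u - 1) (by linarith : (0 : ℝ) ≤ 6 * a - 3)]
  have hpade : (6 * (t + a - 1) + 1) / ((t + a - 1) * (6 * (t + a - 1) + 4))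
      ≤ t / ((t + a) * (t + a - 1)) := by
    rw [div_le_div_iff₀ (by positivity) (by positivity)]
    nlinarith [mul_nonpos_of_nonneg_of_nonpos hw.le hE]
  have hlog := log_add_one_sub_log_le hw
  rw [show t + a - 1 + 1 = t + a by ring] at hlog
  linarith

theorem samuelsExponent_le_max {a u : ℝ} (ha : 0 < a) (hu : 1 ≤ u) :
    samuelsExponent a u ≤ max 1 (log (1 + a) - log a) := by
  rcases le_or_gt 0 (u * (6 * a - 3) + 6 * a ^ 2 - 8 * a + 2) with h | h
  · exact le_max_of_le_left (samuelsExponent_le_one ha hu h)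
  · refine le_max_of_le_right ?_
    calc samuelsExponent a u ≤ samuelsExponent a 1 :=
          samuelsExponent_antitoneOn ha h ⟨le_rfl, hu⟩ ⟨hu, le_rfl⟩ hu
      _ = log (1 + a) - log a := by simp [samuelsExponent]

theorem min_le_one_sub_div_rpow {M σ δ : ℝ} (hM : 0 < M) (hMσ : M ≤ σ) (hδ : 0 < δ) :
    min (δ / (δ + M)) (exp (-1)) ≤ (1 - M / (σ + δ)) ^ (σ / M) := by
  set a := δ / M with ha_def
  set u := σ / M with hu_def
  have ha : 0 < a := by positivity
  have hu : 1 ≤ u := (one_le_div hM).2 hMσ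
  have hpow : (1 - M / (σ + δ)) ^ u = exp (-samuelsExponent a u) := by
    have hbase : 1 - M / (σ + δ) = (u + a - 1) / (u + a) := by
      have : σ + δ ≠ 0 := by linarith
      rw [hu_def, ha_def]; field_simp
    rw [hbase, rpow_def_of_pos (div_pos (by linarith) (by linarith)),
      log_div (by linarith) (by linarith), samuelsExponent]
    ring_nf
  have hleft : δ / (δ + M) = exp (-(log (1 + a) - log a)) := by
    rw [neg_sub, exp_sub, exp_log ha, exp_log (by linarith), ha_def]
    field_simp
    ring
  rw [hpow]
  rcases le_max_iff.1 (samuelsExponent_le_max ha hu) with h | h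
  · exact min_le_of_right_le (exp_le_exp.2 (by linarith))
  · exact min_le_of_left_le (hleft ▸ exp_le_exp.2 (by linarith))

theorem rpow_sum_div_le_prod_one_sub {ι : Type*} (s : Finset ι) {μ : ι → ℝ} {M c : ℝ}
    (hM : 0 < M) (hMc : M ≤ c) (hμ : ∀ j ∈ s, 0 ≤ μ j ∧ μ j ≤ M) :
    (1 - M / c) ^ ((∑ j ∈ s, μ j) / M) ≤ ∏ j ∈ s, (1 - μ j / c) := by
  have hc : 0 < c := hM.trans_le hMc
  have hx : 0 ≤ 1 - M / c := sub_nonneg.2 ((div_le_one hc).2 hMc)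
  rw [sum_div, rpow_sum_of_nonneg hx fun j hj => div_nonneg (hμ j hj).1 hM.le]
  refine prod_le_prod (fun j _ => rpow_nonneg hx _) fun j hj => ?_
  calc (1 - M / c) ^ (μ j / M) = (1 + -(M / c)) ^ (μ j / M) := by rw [sub_eq_add_neg]
    _ ≤ 1 + μ j / M * -(M / c) :=
        rpow_one_add_le_one_add_mul_self (by linarith) (div_nonneg (hμ j hj).1 hM.le)
          ((div_le_one hM).2 (hμ j hj).2)
    _ = 1 - μ j / c := by field_simp; ring

theorem samuels_bound_ge_feige_bound_general (n : ℕ) (hn : 0 < n) (μ : Fin n → ℝ)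
    (hanti : Antitone μ) (hpos : ∀ i, 0 < μ i)
    (δ : ℝ) (hδ : 0 < δ) :
    min (δ / (δ + μ ⟨0, hn⟩)) (1 / Real.exp 1) ≤
      Finset.univ.inf' (Finset.univ_nonempty_iff.mpr ⟨⟨0, hn⟩⟩)
        (fun i : Fin n =>
          ∏ j ∈ Finset.Iic i, (1 - μ j / ((∑ k ∈ Finset.Iic i, μ k) + δ))) := by
  refine le_inf' _ _ fun i _ => ?_
  have hle_first : ∀ j, μ j ≤ μ ⟨0, hn⟩ := fun j => hanti (Fin.mk_le_of_le_val (Nat.zero_le _))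
  have hfirst_le_sum : μ ⟨0, hn⟩ ≤ ∑ k ∈ Iic i, μ k :=
    single_le_sum (fun j _ => (hpos j).le) (mem_Iic.2 (Fin.mk_le_of_le_val (Nat.zero_le _)))
  calc min (δ / (δ + μ ⟨0, hn⟩)) (1 / exp 1)
      = min (δ / (δ + μ ⟨0, hn⟩)) (exp (-1)) := by rw [exp_neg, one_div]
    _ ≤ (1 - μ ⟨0, hn⟩ / ((∑ k ∈ Iic i, μ k) + δ)) ^ ((∑ k ∈ Iic i, μ k) / μ ⟨0, hn⟩) :=
        min_le_one_sub_div_rpow (hpos _) hfirst_le_sum hδ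
    _ ≤ _ := rpow_sum_div_le_prod_one_sub _ (hpos _) (by linarith)
        fun j _ => ⟨(hpos j).le, hle_first j⟩

theorem samuels_bound_ge_feige_bound (n : ℕ) (hn : 0 < n) (μ : Fin n → ℝ)
    (hanti : Antitone μ) (hpos : ∀ i, 0 < μ i) (hsum : ∑ i, μ i = 1)
    (δ : ℝ) (hδ : 0 < δ) :
    min (δ / (δ + μ ⟨0, hn⟩)) (1 / Real.exp 1) ≤
      Finset.univ.inf' (Finset.univ_nonempty_iff.mpr ⟨⟨0, hn⟩⟩)
        (fun i : Fin n =>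
          ∏ j ∈ Finset.Iic i, (1 - μ j / ((∑ k ∈ Finset.Iic i, μ k) + δ))) :=
  samuels_bound_ge_feige_bound_general n hn μ hanti hpos δ hδ
end

section
/- For every α ∈ (0, ∞) and every M ∈ (0, 1], the minimum of t ↦ Φ(t, αt) over t ∈ [M, 1] is attained at an endpoint: min_{t ∈ [M,1]} Φ(t, αt) = min(Φ(M, αM), Φ(1, α)). -/
/-!
For `t ∈ (0, 1]`,
`Φ(t, αt) = (1/t) log ((1 + (α-1)t) / (1 + αt)) = -∫_{α-1}^{α} dx / (1 + tx)`,
an average of the concave functions `t ↦ -1/(1 + tx)`. Hence `t ↦ Φ(t, αt)` is concave on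
`[0, 1]`, and a concave function attains its minimum over a segment at an endpoint.
-/

/-- The function `Φ : [0,1] × (0,∞) → ℝ` from the paper, extended by the given
formulas to all of `ℝ × ℝ`. -/
noncomputable def Phi (μ ρ : ℝ) : ℝ :=
  if μ = 0 then -1 / (1 + ρ) else (1 / μ) * Real.log (1 - μ / (1 + ρ))

open Real Set MeasureTheory intervalIntegral

lemma ConcaveOn.isLeast_image_Icc {𝕜 β : Type*} [Field 𝕜] [LinearOrder 𝕜]
    [IsStrictOrderedRing 𝕜] [AddCommGroup β] [LinearOrder β] [IsOrderedAddMonoid β]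
    [Module 𝕜 β] [IsStrictOrderedModule 𝕜 β] {f : 𝕜 → β} {a b : 𝕜}
    (hf : ConcaveOn 𝕜 (Icc a b) f) (hab : a ≤ b) :
    IsLeast (f '' Icc a b) (min (f a) (f b)) := by
  have ha : a ∈ Icc a b := left_mem_Icc.2 hab
  have hb : b ∈ Icc a b := right_mem_Icc.2 hab
  refine ⟨?_, forall_mem_image.2 fun z hz => hf.min_le_of_mem_Icc ha hb hz⟩
  rcases min_choice (f a) (f b) with h | h <;> rw [h]
  exacts [mem_image_of_mem f ha, mem_image_of_mem f hb]

lemma one_add_mul_pos_of_mem_Icc {t x : ℝ} (ht : t ∈ Icc (0 : ℝ) 1) (hx : -1 < x) :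
    0 < 1 + t * x := by
  rcases le_total 0 x with hx0 | hx0
  · nlinarith [mul_nonneg ht.1 hx0]
  · nlinarith [mul_nonneg (sub_nonneg.2 ht.2) (neg_nonneg.2 hx0)]

lemma convexOn_inv_one_add_mul (x : ℝ) :
    ConvexOn ℝ {t | 0 < 1 + t * x} fun t => (1 + t * x)⁻¹ := by
  have hg : ∀ t : ℝ, AffineMap.lineMap (1 : ℝ) (1 + x) t = 1 + t * x := fun t => by
    rw [AffineMap.lineMap_apply_ring']; ring
  simpa [Function.comp_def, hg, preimage] using
    (convexOn_zpow (𝕜 := ℝ) (-1)).comp_affineMap (AffineMap.lineMap (1 : ℝ) (1 + x))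

lemma concaveOn_neg_integral_inv_one_add_mul {a b : ℝ} (ha : -1 < a) (hab : a ≤ b) :
    ConcaveOn ℝ (Icc 0 1) fun t => -∫ x in a..b, (1 + t * x)⁻¹ := by
  simp only [integral_of_le hab]
  refine (integral_convexOn_of_integrand_ae (convex_Icc 0 1) ?_ fun t ht => ?_).neg
  · refine ae_restrict_of_forall_mem measurableSet_Ioc fun x hx => ?_
    exact (convexOn_inv_one_add_mul x).subset
      (fun t ht => one_add_mul_pos_of_mem_Icc ht (ha.trans hx.1)) (convex_Icc 0 1)
  · refine (ContinuousOn.integrableOn_Icc ?_).mono_set Ioc_subset_Icc_self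
    exact (continuousOn_const.add (continuousOn_const.mul continuousOn_id)).inv₀
      fun x hx => (one_add_mul_pos_of_mem_Icc ht (ha.trans_le hx.1)).ne'

lemma integral_inv_one_add_mul {t a b : ℝ} (ht : t ≠ 0) (ha : 0 < 1 + t * a)
    (hb : 0 < 1 + t * b) :
    ∫ x in a..b, (1 + t * x)⁻¹ = t⁻¹ * log ((1 + t * b) / (1 + t * a)) := by
  rw [integral_comp_add_mul (fun y => y⁻¹) ht, integral_inv_of_pos ha hb, smul_eq_mul]

lemma Phi_mul_self_eq_neg_integral {α t : ℝ} (hα : 0 < α) (ht : t ∈ Ioc (0 : ℝ) 1) :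
    Phi t (α * t) = -∫ x in (α - 1)..α, (1 + t * x)⁻¹ := by
  have ht' : t ∈ Icc (0 : ℝ) 1 := Ioc_subset_Icc_self ht
  have hB := one_add_mul_pos_of_mem_Icc ht' (show -1 < α - 1 by linarith)
  have hA := one_add_mul_pos_of_mem_Icc ht' (show -1 < α by linarith)
  rw [integral_inv_one_add_mul ht.1.ne' hB hA, Phi, if_neg ht.1.ne', ← mul_neg, ← log_inv,
    inv_div, one_div]
  congr 2
  field_simp
  ring

theorem Phi_min_on_Icc_attained_at_endpoints (α : ℝ) (hα : α ∈ Set.Ioi (0:ℝ))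
    (M : ℝ) (hM : M ∈ Set.Ioc (0:ℝ) 1) :
    IsLeast ((fun t => Phi t (α * t)) '' Set.Icc M 1) (min (Phi M (α * M)) (Phi 1 α)) := by
  obtain ⟨hM0, hM1⟩ := hM
  have hconc : ConcaveOn ℝ (Icc M 1) fun t => Phi t (α * t) :=
    ((concaveOn_neg_integral_inv_one_add_mul (by linarith [mem_Ioi.1 hα]) (by linarith)).subset
      (Icc_subset_Icc hM0.le le_rfl) (convex_Icc M 1)).congr
      fun t ht => (Phi_mul_self_eq_neg_integral hα ⟨hM0.trans_le ht.1, ht.2⟩).symm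
  simpa using hconc.isLeast_image_Icc hM1
end

section
/- Let n ≥ 1, μ_1 ≥ … ≥ μ_n > 0 with μ_1 + … + μ_n = 1, let δ > 0, and for i ∈ {1, …, n} let σ_i = ∑_{k=1}^i μ_k and M = μ_1. Then for every i ∈ {1, …, n}, ∑_{j=1}^i log(1 − μ_j/(σ_i + δ)) = ∑_{j=1}^i (μ_j/σ_i)·Φ(μ_j/σ_i, δ/σ_i) ≥ Φ(M/σ_i, δ/σ_i). -/
open Real Set

theorem ConcaveOn.div_le_div_of_map_zero {s : Set ℝ} {f : ℝ → ℝ} (hf : ConcaveOn ℝ s f)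
    (h0 : 0 ∈ s) (hf0 : f 0 = 0) {x y : ℝ} (hx : x ∈ s) (hy : y ∈ s) (hx0 : 0 < x)
    (hxy : x ≤ y) : f y / y ≤ f x / x := by
  have h := hf.neg.secant_mono h0 hx hy hx0.ne' (hx0.trans_le hxy).ne' hxy
  simp only [Pi.neg_apply, hf0, neg_zero, sub_zero, neg_div] at h
  exact neg_le_neg_iff.mp h

theorem concaveOn_log_one_sub_div {c : ℝ} (hc : 0 < c) :
    ConcaveOn ℝ (Iio c) fun t => log (1 - t / c) := by
  set g : ℝ →ᵃ[ℝ] ℝ := AffineMap.lineMap 1 (1 - 1 / c)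
  have hg : ∀ t, g t = 1 - t / c := fun t => by
    rw [AffineMap.lineMap_apply_ring']
    ring
  have hset : Iio c = g ⁻¹' Ioi 0 := by
    ext t
    rw [mem_preimage, hg, mem_Ioi, sub_pos, div_lt_one hc, mem_Iio]
  have hfun : (fun t => log (1 - t / c)) = log ∘ g := by
    ext t
    rw [Function.comp_apply, hg]
  rw [hset, hfun]
  exact strictConcaveOn_log_Ioi.concaveOn.comp_affineMap g

theorem Phi_of_ne_zero {μ : ℝ} (ρ : ℝ) (hμ : μ ≠ 0) :
    Phi μ ρ = log (1 - μ / (1 + ρ)) / μ := by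
  rw [Phi, if_neg hμ, one_div_mul_eq_div]

theorem Phi_antitoneOn (ρ : ℝ) : AntitoneOn (Phi · ρ) (Ioo 0 (1 + ρ)) := by
  intro x hx y hy hxy
  have hc : 0 < 1 + ρ := hx.1.trans hx.2
  simp only [Phi_of_ne_zero ρ hx.1.ne', Phi_of_ne_zero ρ (hx.1.trans_le hxy).ne']
  exact (concaveOn_log_one_sub_div hc).div_le_div_of_map_zero (by simpa using hc) (by simp)
    hx.2 hy.2 hx.1 hxy

theorem mul_Phi_div {m σ : ℝ} (δ : ℝ) (hm : m ≠ 0) (hσ : σ ≠ 0) :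
    m / σ * Phi (m / σ) (δ / σ) = log (1 - m / (σ + δ)) := by
  rw [Phi_of_ne_zero _ (div_ne_zero hm hσ), mul_div_cancel₀ _ (div_ne_zero hm hσ),
    one_add_div hσ, div_div_div_cancel_right₀ hσ]

theorem log_sum_eq_Phi_sum_ge_Phi_general (n : ℕ) (hn : 0 < n) (μ : Fin n → ℝ)
    (hanti : Antitone μ) (hpos : ∀ i, 0 < μ i)
    (δ : ℝ) (hδ : 0 < δ) (i : Fin n) :
    (∑ j ∈ Finset.Iic i,
        Real.log (1 - μ j / ((∑ k ∈ Finset.Iic i, μ k) + δ)) =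
      ∑ j ∈ Finset.Iic i,
        (μ j / (∑ k ∈ Finset.Iic i, μ k)) *
          Phi (μ j / (∑ k ∈ Finset.Iic i, μ k)) (δ / (∑ k ∈ Finset.Iic i, μ k))) ∧
    Phi (μ ⟨0, hn⟩ / (∑ k ∈ Finset.Iic i, μ k)) (δ / (∑ k ∈ Finset.Iic i, μ k)) ≤
      ∑ j ∈ Finset.Iic i,
        Real.log (1 - μ j / ((∑ k ∈ Finset.Iic i, μ k) + δ)) := by
  set σ := ∑ k ∈ Finset.Iic i, μ k
  have hσ : 0 < σ := Finset.sum_pos (fun k _ => hpos k) ⟨i, Finset.mem_Iic.mpr le_rfl⟩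
  have hlog : ∑ j ∈ Finset.Iic i, log (1 - μ j / (σ + δ)) =
      ∑ j ∈ Finset.Iic i, μ j / σ * Phi (μ j / σ) (δ / σ) :=
    Finset.sum_congr rfl fun j _ => (mul_Phi_div δ (hpos j).ne' hσ.ne').symm
  refine ⟨hlog, ?_⟩
  have hfirst : ∀ j, (⟨0, hn⟩ : Fin n) ≤ j := fun j => Fin.mk_le_of_le_val (Nat.zero_le _)
  have hmax : μ ⟨0, hn⟩ ≤ σ :=
    Finset.single_le_sum (fun k _ => (hpos k).le) (Finset.mem_Iic.mpr (hfirst i))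
  have hmem : ∀ j, μ j / σ ∈ Ioo 0 (1 + δ / σ) := fun j =>
    ⟨div_pos (hpos j) hσ, by
      linarith [div_le_one_of_le₀ ((hanti (hfirst j)).trans hmax) hσ.le, div_pos hδ hσ]⟩
  calc Phi (μ ⟨0, hn⟩ / σ) (δ / σ)
      = ∑ j ∈ Finset.Iic i, μ j / σ * Phi (μ ⟨0, hn⟩ / σ) (δ / σ) := by
        rw [← Finset.sum_mul, ← Finset.sum_div, div_self hσ.ne', one_mul]
    _ ≤ ∑ j ∈ Finset.Iic i, μ j / σ * Phi (μ j / σ) (δ / σ) := by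
        refine Finset.sum_le_sum fun j _ => mul_le_mul_of_nonneg_left ?_ (div_pos (hpos j) hσ).le
        exact Phi_antitoneOn _ (hmem j) (hmem _)
          (div_le_div_of_nonneg_right (hanti (hfirst j)) hσ.le)
    _ = _ := hlog.symm

theorem log_sum_eq_Phi_sum_ge_Phi (n : ℕ) (hn : 0 < n) (μ : Fin n → ℝ)
    (hanti : Antitone μ) (hpos : ∀ i, 0 < μ i) (hsum : ∑ i, μ i = 1)
    (δ : ℝ) (hδ : 0 < δ) (i : Fin n) :
    (∑ j ∈ Finset.Iic i,
        Real.log (1 - μ j / ((∑ k ∈ Finset.Iic i, μ k) + δ)) =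
      ∑ j ∈ Finset.Iic i,
        (μ j / (∑ k ∈ Finset.Iic i, μ k)) *
          Phi (μ j / (∑ k ∈ Finset.Iic i, μ k)) (δ / (∑ k ∈ Finset.Iic i, μ k))) ∧
    Phi (μ ⟨0, hn⟩ / (∑ k ∈ Finset.Iic i, μ k)) (δ / (∑ k ∈ Finset.Iic i, μ k)) ≤
      ∑ j ∈ Finset.Iic i,
        Real.log (1 - μ j / ((∑ k ∈ Finset.Iic i, μ k) + δ)) :=
  log_sum_eq_Phi_sum_ge_Phi_general n hn μ hanti hpos δ hδ i
end
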